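/- arXiv:1403.7838 — 4 statements merged into one kernel-verified Lean document; each statement's English description precedes it below -/
import Mathlib

section
/- If X is a rack that projects onto (admits a surjective rack homomorphism to) a rack of type D, then X is itself of type D. -/
open Quandles

/-- A subset of a rack is a subrack if it is closed under the rack operation. -/
def IsSubrack {X : Type*} [Rack X] (A : Set X) : Prop :=
  ∀ x ∈ A, ∀ y ∈ A, x ◃ y ∈ A

/-- A rack `X` is of type D if there is a decomposable subrack `Y = R ⊔ S`
(with `R ▷ S ⊆ S` and `S ▷ R ⊆ R`) and elements `r ∈ R`, `s ∈ S` with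
`r ▷ (s ▷ (r ▷ s)) ≠ s`. -/
def IsTypeD (X : Type*) [Rack X] : Prop :=
  ∃ R S : Set X, R.Nonempty ∧ S.Nonempty ∧ Disjoint R S ∧
    IsSubrack R ∧ IsSubrack S ∧
    (∀ x ∈ R, ∀ y ∈ S, x ◃ y ∈ S) ∧ (∀ x ∈ S, ∀ y ∈ R, x ◃ y ∈ R) ∧
    ∃ r ∈ R, ∃ s ∈ S, r ◃ (s ◃ (r ◃ s)) ≠ s

/-- If a rack `X` admits a surjective rack homomorphism onto a rack of
type D, then `X` is itself of type D. -/
theorem typeD_of_projection {X Y : Type*} [Rack X] [Rack Y] (f : X →◃ Y)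
    (hf : Function.Surjective f.toFun) (hY : IsTypeD Y) : IsTypeD X := by
  obtain ⟨R, S, ⟨r0, hr0⟩, ⟨s0, hs0⟩, hdisj, hR, hS, hRS, hSR, r, hr, s, hs, hne⟩ := hY
  refine ⟨f.toFun ⁻¹' R, f.toFun ⁻¹' S, ?_, ?_, ?_, ?_, ?_, ?_, ?_, ?_⟩
  · obtain ⟨x, hx⟩ := hf r0; exact ⟨x, show f.toFun x ∈ R from hx ▸ hr0⟩
  · obtain ⟨x, hx⟩ := hf s0; exact ⟨x, show f.toFun x ∈ S from hx ▸ hs0⟩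
  · rw [Set.disjoint_left]
    intro a ha ha'
    exact Set.disjoint_left.mp hdisj ha ha'
  · intro x hx y hy
    simp only [Set.mem_preimage, f.map_act'] at hx hy ⊢
    exact hR _ hx _ hy
  · intro x hx y hy
    simp only [Set.mem_preimage, f.map_act'] at hx hy ⊢
    exact hS _ hx _ hy
  · intro x hx y hy
    simp only [Set.mem_preimage, f.map_act'] at hx hy ⊢
    exact hRS _ hx _ hy
  · intro x hx y hy
    simp only [Set.mem_preimage, f.map_act'] at hx hy ⊢
    exact hSR _ hx _ hy
  · obtain ⟨r', hr'⟩ := hf r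
    obtain ⟨s', hs'⟩ := hf s
    refine ⟨r', show f.toFun r' ∈ R from hr' ▸ hr, s', show f.toFun s' ∈ S from hs' ▸ hs, ?_⟩
    intro h
    apply hne
    have := congrArg f.toFun h
    simpa [f.map_act', hr', hs'] using this
end

section
/- Every indecomposable finite rack with more than one element admits a surjective rack homomorphism onto a simple rack. -/
open Quandles

/-- A finite rack is decomposable if it is the disjoint union of two nonempty proper
mutually stable subracks. -/
def IsDecomposable (X : Type*) [Rack X] : Prop :=
  ∃ R S : Set X, R.Nonempty ∧ S.Nonempty ∧ Disjoint R S ∧ R ∪ S = Set.univ ∧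
    (∀ x ∈ R, ∀ y ∈ R, x ◃ y ∈ R) ∧ (∀ x ∈ S, ∀ y ∈ S, x ◃ y ∈ S) ∧
    (∀ x ∈ R, ∀ y ∈ S, x ◃ y ∈ S) ∧ (∀ x ∈ S, ∀ y ∈ R, x ◃ y ∈ R)

/-- A rack `Y` with more than one element is simple if every surjective rack
homomorphism out of `Y` is injective or has a one-element image. -/
def IsSimpleRack (Y : Type u) [Rack Y] : Prop :=
  1 < Nat.card Y ∧
    ∀ (Z : Type u) (_ : Rack Z) (π : Y →◃ Z), Function.Surjective π.toFun →
      Function.Injective π.toFun ∨ Subsingleton Z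

/-- Every indecomposable finite rack with more than one element admits a
surjective rack homomorphism onto a simple rack. -/
theorem indecomposable_projects_onto_simple (X : Type u) [Rack X] [Finite X]
    (hX : ¬ IsDecomposable X) (hcard : 1 < Nat.card X) :
    ∃ (Y : Type u) (_ : Rack Y) (π : X →◃ Y),
      Function.Surjective π.toFun ∧ IsSimpleRack Y := by
  classical
  -- Consider the set of cardinalities of nontrivial rack-homomorphic images of `X`.
  set P : Set ℕ := {n | ∃ (Y : Type u) (_ : Rack Y) (π : X →◃ Y),
      Function.Surjective π.toFun ∧ 1 < Nat.card Y ∧ Nat.card Y = n} with hP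
  have hne : P.Nonempty := ⟨Nat.card X, X, inferInstance, ShelfHom.id X,
      Function.surjective_id, hcard, rfl⟩
  -- Take an image of minimal cardinality (> 1).
  obtain ⟨Y, instY, π, hsurj, hY1, hYn⟩ := Nat.sInf_mem hne
  refine ⟨Y, instY, π, hsurj, hY1, ?_⟩
  intro Z instZ σ hσ
  haveI : Finite Y := Finite.of_surjective _ hsurj
  haveI : Finite Z := Finite.of_surjective _ hσ
  by_cases h : 1 < Nat.card Z
  · left
    -- `Z` is also a nontrivial image of `X`, hence `Nat.card Y ≤ Nat.card Z` by minimality.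
    have hZP : Nat.card Z ∈ P :=
      ⟨Z, instZ, σ.comp π, (hσ.comp hsurj : Function.Surjective (σ.toFun ∘ π.toFun)), h, rfl⟩
    have h1 : sInf P ≤ Nat.card Z := Nat.sInf_le hZP
    have h2 : Nat.card Z ≤ Nat.card Y := Nat.card_le_card_of_surjective _ hσ
    have hbij : Function.Bijective σ.toFun :=
      (Nat.bijective_iff_surjective_and_card σ.toFun).mpr ⟨hσ, le_antisymm (hYn ▸ h1) h2⟩
    exact hbij.injective
  · right
    rw [Finite.one_lt_card_iff_nontrivial] at h
    exact not_nontrivial_iff_subsingleton.mp h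
end

section
/- An affine rack (A, g) with A a finite abelian group and g ∈ Aut(A) is indecomposable if and only if id − g is surjective. -/
/-- The affine rack `(A, g)` (a finite abelian group `A` with
`a ▷ b = g(b) + (id − g)(a)`) is indecomposable (it is not the disjoint union of two
nonempty proper mutually stable subracks) if and only if `id − g` is surjective. -/
theorem affine_rack_indecomposable_iff {A : Type*} [AddCommGroup A] [Fintype A]
    (g : AddAut A) :
    let act : A → A → A := fun a b => g b + (a - g a)
    (¬ ∃ R S : Set A, R.Nonempty ∧ S.Nonempty ∧ Disjoint R S ∧ R ∪ S = Set.univ ∧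
        (∀ a ∈ R, ∀ b ∈ R, act a b ∈ R) ∧ (∀ a ∈ S, ∀ b ∈ S, act a b ∈ S) ∧
        (∀ a ∈ R, ∀ b ∈ S, act a b ∈ S) ∧ (∀ a ∈ S, ∀ b ∈ R, act a b ∈ R)) ↔
      Function.Surjective (fun a : A => a - g a) := by
  intro act
  have hact : ∀ a b : A, act a b = g b + (a - g a) := fun _ _ => rfl
  set f : A →+ A := AddMonoidHom.id A - (g : A →+ A) with hf
  have hfa : ∀ a, f a = a - g a := fun a => rfl
  constructor
  · intro h
    by_contra hns
    apply h
    -- the range of f is a proper subgroup; build a decomposition from it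
    have hmem : ∀ b : A, g b ∈ f.range ↔ b ∈ f.range := by
      intro b
      constructor
      · rintro ⟨c, hc⟩
        refine ⟨g.symm c, ?_⟩
        have := congrArg g.symm hc
        simpa [hfa, map_sub] using this
      · rintro ⟨c, hc⟩
        exact ⟨g c, by simp [hfa] at hc ⊢; rw [← hc]; simp [map_sub]⟩
    obtain ⟨y, hy⟩ : ∃ y : A, y ∉ f.range := by
      by_contra hall
      push_neg at hall
      exact hns fun x => by simpa [hfa] using (hall x)
    refine ⟨(f.range : Set A), (f.range : Set A)ᶜ, ⟨0, by exact ⟨0, by simp [hfa]⟩⟩, ⟨y, hy⟩,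
      disjoint_compl_right, Set.union_compl_self _, ?_, ?_, ?_, ?_⟩
    · intro a ha b hb
      rw [hact]
      exact AddSubgroup.add_mem _ ((hmem b).2 hb) (by exact ⟨a, rfl⟩)
    · intro a ha b hb
      rw [hact]
      intro hmem'
      apply hb
      have : g b ∈ f.range := by
        have h2 : (a - g a) ∈ f.range := ⟨a, rfl⟩
        have := AddSubgroup.sub_mem _ hmem' h2
        simpa using this
      exact (hmem b).1 this
    · intro a ha b hb
      rw [hact]
      intro hmem'
      apply hb
      have : g b ∈ f.range := by
        have h2 : (a - g a) ∈ f.range := ⟨a, rfl⟩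
        have := AddSubgroup.sub_mem _ hmem' h2
        simpa using this
      exact (hmem b).1 this
    · intro a ha b hb
      rw [hact]
      exact AddSubgroup.add_mem _ ((hmem b).2 hb) ⟨a, rfl⟩
  · rintro hsurj ⟨R, S, ⟨b, hb⟩, ⟨s, hs⟩, hdisj, huniv, hRR, _, _, hSR⟩
    -- every element is in R, contradicting s ∈ S
    have hRall : ∀ x : A, x ∈ R := by
      intro x
      obtain ⟨a, ha⟩ := hsurj (x - g b)
      have hx : act a b = x := by
        rw [hact]; simp at ha; rw [ha]; abel
      have haRS : a ∈ R ∪ S := huniv ▸ Set.mem_univ a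
      rcases haRS with haR | haS
      · exact hx ▸ hRR a haR b hb
      · exact hx ▸ hSR a haS b hb
    exact absurd (hRall s) (fun h => Set.disjoint_left.1 hdisj h hs)
end

section
/- Let H be a Hopf algebra and π : K → H, ι : H → K Hopf algebra maps with π ∘ ι = id_H. Then the coinvariant subalgebra R = K^{co π} = {x ∈ K : (id ⊗ π)Δ(x) = x ⊗ 1} is a subalgebra of K containing 1, stable under the maps x ↦ ι(h₍₁₎) x ι(S(h₍₂₎)) for h ∈ H, and the multiplication map R ⊗ H → K, r ⊗ h ↦ r ι(h), is a bijection. -/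
/-!
The coaction `θ = (id ⊗ π) ∘ Δ : K → K ⊗ H` is an algebra map, so its coinvariants
`R = {x | θ x = x ⊗ 1}` form a subalgebra. Everything else is computed in convolution algebras,
where an algebra map `φ` out of `H` has convolution inverse `φ ∘ S`; this way one never needs that
`S` reverses the comultiplication. One has `θ = (· ⊗ 1) * (1 ⊗ π ·)`, hence
`θ ∘ ι = (ι · ⊗ 1) * (1 ⊗ ·)`, and inverting gives `(1 ⊗ ·) * (θ ∘ ι ∘ S) = ι (S ·) ⊗ 1`.
This identity shows both that the adjoint action `x ↦ ι(h₍₁₎) x ι(S h₍₂₎)` preserves `R` and that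
`P = id * (ι ∘ S ∘ π)` takes values in `R`. Then `x ↦ P(x₍₁₎) ⊗ π(x₍₂₎)` inverts
`r ⊗ h ↦ r ι(h)`: one composite is `P * (ι ∘ π) = id * (((ι ∘ S) * ι) ∘ π) = id`, the other
reduces to `P(r ι(h)) = ε(h) r` for `r ∈ R`.
-/

open TensorProduct Coalgebra HopfAlgebra WithConv

section Convolution

variable {R C A B : Type*} [CommSemiring R] [Semiring A] [Algebra R A] [Semiring B] [Algebra R B]

lemma LinearMap.mulRight_comp_convMul [AddCommMonoid C] [Module R C] [CoalgebraStruct R C]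
    (f g : C →ₗ[R] A) {a : A} (ha : ∀ c, Commute a (g c)) :
    LinearMap.mulRight R a ∘ₗ (toConv f * toConv g).ofConv
      = (toConv (LinearMap.mulRight R a ∘ₗ f) * toConv g).ofConv := by
  ext c
  simp only [LinearMap.comp_apply, LinearMap.mulRight_apply, (ℛ R c).convMul_apply,
    Finset.sum_mul, mul_assoc, (ha _).eq]

lemma LinearMap.convMul_includeLeft_includeRight [AddCommMonoid C] [Module R C]
    [CoalgebraStruct R C] (f : C →ₗ[R] A) (g : C →ₗ[R] B) :
    (toConv (Algebra.TensorProduct.includeLeft.toLinearMap ∘ₗ f) *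
      toConv (Algebra.TensorProduct.includeRight.toLinearMap ∘ₗ g)).ofConv
      = TensorProduct.map f g ∘ₗ comul := by
  ext c
  simp [(ℛ R c).convMul_apply, ← (ℛ R c).eq, map_sum]

variable [Semiring C] [HopfAlgebra R C]

lemma AlgHom.toConv_mul_toConv_comp_antipode (φ : C →ₐ[R] A) :
    toConv φ.toLinearMap * toConv (φ.toLinearMap ∘ₗ antipode R) = 1 := by
  have := LinearMap.algHom_comp_convMul_distrib φ (toConv .id) (toConv (antipode R))
  rw [LinearMap.id_mul_antipode] at this
  ext c
  simpa using congr($this.symm c)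

lemma AlgHom.toConv_comp_antipode_mul_toConv (φ : C →ₐ[R] A) :
    toConv (φ.toLinearMap ∘ₗ antipode R) * toConv φ.toLinearMap = 1 := by
  have := LinearMap.algHom_comp_convMul_distrib φ (toConv (antipode R)) (toConv .id)
  rw [LinearMap.antipode_mul_id] at this
  ext c
  simpa using congr($this.symm c)

lemma AlgHom.convMul_comp_antipode_of_eq_convMul {φ ψ : C →ₐ[R] A} {κ : C →ₗ[R] A}
    (h : φ.toLinearMap = (toConv ψ.toLinearMap * toConv κ).ofConv) :
    toConv κ * toConv (φ.toLinearMap ∘ₗ antipode R) = toConv (ψ.toLinearMap ∘ₗ antipode R) := by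
  replace h : toConv φ.toLinearMap = toConv ψ.toLinearMap * toConv κ := congrArg toConv h
  calc toConv κ * toConv (φ.toLinearMap ∘ₗ antipode R)
      = toConv (ψ.toLinearMap ∘ₗ antipode R) * (toConv ψ.toLinearMap * toConv κ) *
          toConv (φ.toLinearMap ∘ₗ antipode R) := by
        rw [← mul_assoc, ψ.toConv_comp_antipode_mul_toConv, one_mul]
    _ = toConv (ψ.toLinearMap ∘ₗ antipode R) := by
        rw [← h, mul_assoc, φ.toConv_mul_toConv_comp_antipode, mul_one]

end Convolution

namespace Radford

open Algebra.TensorProduct (includeLeft includeRight)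

variable {k K H : Type*} [CommSemiring k] [Semiring K] [Semiring H] [Bialgebra k K]
  [HopfAlgebra k H] (π : K →ₐc[k] H) (ι : H →ₐc[k] K)

noncomputable def coaction : K →ₐ[k] K ⊗[k] H :=
  (Algebra.TensorProduct.map (AlgHom.id k K) π).comp (Bialgebra.comulAlgHom k K)

lemma coaction_toLinearMap :
    (coaction π).toLinearMap = LinearMap.lTensor K π.toLinearMap ∘ₗ comul :=
  rfl

noncomputable def coinvariants : Subalgebra k K :=
  AlgHom.equalizer (coaction π) includeLeft

lemma mem_coinvariants {x : K} : x ∈ coinvariants π ↔ coaction π x = x ⊗ₜ 1 := Iff.rfl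

lemma coaction_eq_convMul :
    (coaction π).toLinearMap =
      (toConv (includeLeft : K →ₐ[k] K ⊗[k] H).toLinearMap *
        toConv ((includeRight : H →ₐ[k] K ⊗[k] H).toLinearMap ∘ₗ π.toLinearMap)).ofConv := by
  rw [← LinearMap.comp_id (includeLeft : K →ₐ[k] K ⊗[k] H).toLinearMap,
    LinearMap.convMul_includeLeft_includeRight, coaction_toLinearMap]
  rfl

lemma coaction_comp_iota (hπι : ∀ h : H, π (ι h) = h) :
    (coaction π).toLinearMap ∘ₗ ι.toLinearMap = TensorProduct.map ι.toLinearMap .id ∘ₗ comul := by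
  have hπι' : π.toLinearMap ∘ₗ ι.toLinearMap = .id := LinearMap.ext hπι
  rw [coaction_toLinearMap, LinearMap.comp_assoc, ← ι.map_comp_comul,
    ← LinearMap.comp_assoc, LinearMap.lTensor, ← TensorProduct.map_comp]
  simp only [LinearMap.id_comp]
  rw [hπι']

lemma coaction_comp_iota_eq_convMul (hπι : ∀ h : H, π (ι h) = h) :
    ((coaction π).comp ι).toLinearMap =
      (toConv ((includeLeft : K →ₐ[k] K ⊗[k] H).comp ι).toLinearMap *
        toConv (includeRight : H →ₐ[k] K ⊗[k] H).toLinearMap).ofConv := by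
  rw [← LinearMap.comp_id (includeRight : H →ₐ[k] K ⊗[k] H).toLinearMap]
  exact (coaction_comp_iota π ι hπι).trans
    (LinearMap.convMul_includeLeft_includeRight ι.toLinearMap .id).symm

noncomputable def adjointAction : H ⊗[k] K →ₗ[k] K :=
  LinearMap.mul' k K ∘ₗ
    LinearMap.lTensor K (LinearMap.mul' k K ∘ₗ (TensorProduct.comm k K K).toLinearMap) ∘ₗ
    (TensorProduct.assoc k K K K).toLinearMap ∘ₗ
    TensorProduct.map
      (TensorProduct.map ι.toLinearMap
        (ι.toLinearMap ∘ₗ HopfAlgebra.antipode (R := k))) LinearMap.id ∘ₗ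
    LinearMap.rTensor K (comul (R := k))

lemma adjointAction_tmul (h : H) (x : K) :
    adjointAction ι (h ⊗ₜ x) =
      (toConv (LinearMap.mulRight k x ∘ₗ ι.toLinearMap) *
        toConv (ι.toLinearMap ∘ₗ antipode k)) h := by
  rw [(ℛ k h).convMul_apply]
  simp [adjointAction, ← (ℛ k h).eq, sum_tmul, map_sum, mul_assoc]

lemma adjointAction_mem_coinvariants (hπι : ∀ h : H, π (ι h) = h) (h : H) {x : K}
    (hx : x ∈ coinvariants π) : adjointAction ι (h ⊗ₜ x) ∈ coinvariants π := by
  set θ := coaction π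
  set β : K →ₐ[k] K ⊗[k] H := includeLeft
  set κ : H →ₐ[k] K ⊗[k] H := includeRight
  set u := LinearMap.mulRight k x ∘ₗ ι.toLinearMap
  set c : K ⊗[k] H := x ⊗ₜ 1
  have hθu : θ.toLinearMap ∘ₗ u = LinearMap.mulRight k c ∘ₗ (θ.comp ι).toLinearMap := by
    ext y
    exact (map_mul θ _ x).trans (congrArg _ ((mem_coinvariants π).1 hx))
  have hβu : β.toLinearMap ∘ₗ u = LinearMap.mulRight k c ∘ₗ (β.comp ι).toLinearMap := by
    ext y
    exact (map_mul β _ x).trans rfl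
  have hc : ∀ y, Commute c (κ.toLinearMap y) := fun y => by
    simp [c, κ, Commute, SemiconjBy]
  have key : θ.toLinearMap ∘ₗ (toConv u * toConv (ι.toLinearMap ∘ₗ antipode k)).ofConv =
      β.toLinearMap ∘ₗ (toConv u * toConv (ι.toLinearMap ∘ₗ antipode k)).ofConv := by
    calc _ = (toConv (θ.toLinearMap ∘ₗ u) *
            toConv ((θ.comp ι).toLinearMap ∘ₗ antipode k)).ofConv :=
          LinearMap.algHom_comp_convMul_distrib _ _ _
      _ = (toConv (LinearMap.mulRight k c ∘ₗ (β.comp ι).toLinearMap) * toConv κ.toLinearMap *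
            toConv ((θ.comp ι).toLinearMap ∘ₗ antipode k)).ofConv := by
          nth_rw 1 [hθu, coaction_comp_iota_eq_convMul π ι hπι]
          rw [LinearMap.mulRight_comp_convMul _ _ hc]
      _ = (toConv (β.toLinearMap ∘ₗ u) *
            toConv (β.toLinearMap ∘ₗ ι.toLinearMap ∘ₗ antipode k)).ofConv := by
          rw [mul_assoc, AlgHom.convMul_comp_antipode_of_eq_convMul
            (coaction_comp_iota_eq_convMul π ι hπι), hβu]
          rfl
      _ = _ := (LinearMap.algHom_comp_convMul_distrib _ _ _).symm
  rw [mem_coinvariants, adjointAction_tmul]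
  exact LinearMap.congr_fun key h

noncomputable def projection : K →ₗ[k] K :=
  (toConv LinearMap.id * toConv ((ι.toLinearMap ∘ₗ antipode k) ∘ₗ π.toLinearMap)).ofConv

lemma projection_mem_coinvariants (hπι : ∀ h : H, π (ι h) = h) (x : K) :
    projection π ι x ∈ coinvariants π := by
  set θ := coaction π
  set β : K →ₐ[k] K ⊗[k] H := includeLeft
  set κ : H →ₐ[k] K ⊗[k] H := includeRight
  have key : θ.toLinearMap ∘ₗ projection π ι = β.toLinearMap ∘ₗ projection π ι := by
    calc _ = (toConv θ.toLinearMap *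
            toConv (((θ.comp ι).toLinearMap ∘ₗ antipode k) ∘ₗ π.toLinearMap)).ofConv := by
          rw [projection, LinearMap.algHom_comp_convMul_distrib]
          rfl
      _ = (toConv β.toLinearMap * (toConv (κ.toLinearMap ∘ₗ π.toLinearMap) *
            toConv (((θ.comp ι).toLinearMap ∘ₗ antipode k) ∘ₗ π.toLinearMap))).ofConv := by
          rw [coaction_eq_convMul π, toConv_ofConv, mul_assoc]
      _ = (toConv β.toLinearMap *
            toConv (((β.comp ι).toLinearMap ∘ₗ antipode k) ∘ₗ π.toLinearMap)).ofConv := by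
          have hcomp := congrArg toConv (LinearMap.convMul_comp_coalgHom_distrib
            (toConv κ.toLinearMap) (toConv ((θ.comp ι).toLinearMap ∘ₗ antipode k)) π.toCoalgHom)
          rw [AlgHom.convMul_comp_antipode_of_eq_convMul
            (coaction_comp_iota_eq_convMul π ι hπι)] at hcomp
          simp only [toConv_ofConv] at hcomp
          rw [← hcomp]
      _ = _ := by
          rw [projection, LinearMap.algHom_comp_convMul_distrib]
          rfl
  exact LinearMap.congr_fun key x

lemma toConv_iota_mul_toConv_iota_comp_antipode :
    toConv ι.toLinearMap * toConv (ι.toLinearMap ∘ₗ antipode k) = 1 :=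
  AlgHom.toConv_mul_toConv_comp_antipode (ι : H →ₐ[k] K)

lemma toConv_iota_comp_antipode_mul_toConv_iota :
    toConv (ι.toLinearMap ∘ₗ antipode k) * toConv ι.toLinearMap = 1 :=
  AlgHom.toConv_comp_antipode_mul_toConv (ι : H →ₐ[k] K)

lemma projection_convMul_iota_comp_pi :
    (toConv (projection π ι) * toConv (ι.toLinearMap ∘ₗ π.toLinearMap)).ofConv = LinearMap.id := by
  have h := congrArg toConv (LinearMap.convMul_comp_coalgHom_distrib
    (toConv (ι.toLinearMap ∘ₗ antipode k)) (toConv ι.toLinearMap) π.toCoalgHom)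
  rw [toConv_iota_comp_antipode_mul_toConv_iota] at h
  have h1 : toConv ((1 : WithConv (H →ₗ[k] K)).ofConv ∘ₗ π.toLinearMap) = 1 := by
    ext; simp
  simp only [toConv_ofConv, h1] at h
  rw [projection, toConv_ofConv, mul_assoc, ← h, mul_one]

lemma projection_eq :
    projection π ι = LinearMap.mul' k K ∘ₗ LinearMap.lTensor K (ι.toLinearMap ∘ₗ antipode k) ∘ₗ
      (coaction π).toLinearMap := by
  rw [coaction_toLinearMap, ← LinearMap.comp_assoc comul, ← LinearMap.lTensor_comp]
  rfl

lemma projection_mul_of_mem {r : K} (hr : r ∈ coinvariants π) (y : K) :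
    projection π ι (r * y) = r * projection π ι y := by
  simp only [projection_eq, LinearMap.comp_apply, AlgHom.toLinearMap_apply, map_mul,
    (mem_coinvariants π).1 hr]
  induction coaction π y using TensorProduct.induction_on with
  | zero => simp
  | tmul a b => simp [mul_assoc]
  | add a b ha hb => simp only [mul_add, map_add, ha, hb]

lemma projection_iota (hπι : ∀ h : H, π (ι h) = h) (h : H) :
    projection π ι (ι h) = algebraMap k K (counit h) := by
  have hπι' : π.toLinearMap ∘ₗ ι.toLinearMap = .id := LinearMap.ext hπι
  have hS : ((ι.toLinearMap ∘ₗ antipode k) ∘ₗ π.toLinearMap) ∘ₗ ι.toLinearMap =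
      ι.toLinearMap ∘ₗ antipode k := by
    rw [LinearMap.comp_assoc, hπι', LinearMap.comp_id]
  have hproj := LinearMap.convMul_comp_coalgHom_distrib (toConv LinearMap.id)
    (toConv ((ι.toLinearMap ∘ₗ antipode k) ∘ₗ π.toLinearMap)) ι.toCoalgHom
  simp only [LinearMap.id_comp] at hproj
  rw [hS, toConv_iota_mul_toConv_iota_comp_antipode] at hproj
  exact (LinearMap.congr_fun hproj h).trans (LinearMap.convOne_apply h)

lemma coaction_mul_iota (hπι : ∀ h : H, π (ι h) = h) {r : K} (hr : r ∈ coinvariants π) (h : H) :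
    coaction π (r * ι h) =
      LinearMap.rTensor H (LinearMap.mulLeft k r ∘ₗ ι.toLinearMap) (comul h) := by
  rw [map_mul, (mem_coinvariants π).1 hr]
  have hι := LinearMap.congr_fun (coaction_comp_iota π ι hπι) h
  simp only [LinearMap.comp_apply, AlgHom.toLinearMap_apply] at hι
  rw [show coaction π (ι h) = _ from hι]
  induction comul (R := k) h using TensorProduct.induction_on with
  | zero => simp
  | tmul a b => simp
  | add a b ha hb => simp only [mul_add, map_add, ha, hb]

theorem bijective_mul'_comp_map_subtype (hπι : ∀ h : H, π (ι h) = h) :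
    Function.Bijective
      (LinearMap.mul' k K ∘ₗ
        TensorProduct.map (coinvariants π).toSubmodule.subtype ι.toLinearMap) := by
  set Φ := LinearMap.mul' k K ∘ₗ
    TensorProduct.map (coinvariants π).toSubmodule.subtype ι.toLinearMap
  set p : K →ₗ[k] (coinvariants π).toSubmodule :=
    (projection π ι).codRestrict _ (projection_mem_coinvariants π ι hπι)
  set Ψ : K →ₗ[k] (coinvariants π).toSubmodule ⊗[k] H :=
    TensorProduct.map p LinearMap.id ∘ₗ (coaction π).toLinearMap
  have hΨΦ : Ψ ∘ₗ Φ = LinearMap.id := by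
    refine TensorProduct.ext' fun r h => ?_
    have hp : p ∘ₗ LinearMap.mulLeft k (r : K) ∘ₗ ι.toLinearMap =
        LinearMap.smulRight counit r := by
      ext h
      change projection π ι (r * ι h) = counit h • (r : K)
      rw [projection_mul_of_mem π ι r.2, projection_iota π ι hπι, Algebra.smul_def,
        Algebra.commutes]
    calc Ψ (Φ (r ⊗ₜ h))
        = TensorProduct.map p LinearMap.id (coaction π (r * ι h)) := rfl
      _ = LinearMap.rTensor H (p ∘ₗ LinearMap.mulLeft k (r : K) ∘ₗ ι.toLinearMap) (comul h) := by
          rw [coaction_mul_iota π ι hπι r.2]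
          exact (LinearMap.rTensor_comp_apply H p _ _).symm
      _ = r ⊗ₜ h := by
          rw [hp, ← (ℛ k h).eq]
          simp only [map_sum, LinearMap.rTensor_tmul, LinearMap.smulRight_apply, smul_tmul,
            ← tmul_sum, sum_counit_smul]
  have hΦΨ : Φ ∘ₗ Ψ = LinearMap.id := by
    have hmap : TensorProduct.map (coinvariants π).toSubmodule.subtype ι.toLinearMap ∘ₗ
        TensorProduct.map p LinearMap.id ∘ₗ LinearMap.lTensor K π.toLinearMap =
          TensorProduct.map (projection π ι) (ι.toLinearMap ∘ₗ π.toLinearMap) :=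
      TensorProduct.ext' fun _ _ => rfl
    rw [← projection_convMul_iota_comp_pi π ι, LinearMap.convMul_def, ofConv_toConv, ← hmap]
    simp only [Φ, Ψ, coaction_toLinearMap, LinearMap.comp_assoc]
  exact Function.bijective_iff_has_inverse.mpr
    ⟨Ψ, LinearMap.congr_fun hΨΦ, LinearMap.congr_fun hΦΨ⟩

end Radford

/-- Let `π : K → H`, `ι : H → K` be Hopf algebra maps with `π ∘ ι = id_H`.
Then the coinvariants `R = K^{co π} = {x : (id ⊗ π)Δ(x) = x ⊗ 1}` form a subalgebra of `K`
containing `1`, stable under the maps `x ↦ ι(h₁) x ι(S(h₂))` for `h ∈ H`, and the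
multiplication map `R ⊗ H → K`, `r ⊗ h ↦ r ι(h)`, is bijective. -/
theorem coinvariants_bosonization {k K H : Type*} [Field k] [Ring K] [Ring H]
    [HopfAlgebra k K] [HopfAlgebra k H]
    (π : K →ₐc[k] H) (ι : H →ₐc[k] K) (hπι : ∀ h : H, π (ι h) = h) :
    let R : Submodule k K := LinearMap.ker
      ((LinearMap.lTensor K π.toLinearMap ∘ₗ comul (R := k)) -
        (TensorProduct.mk k K H).flip 1)
    -- the map `h ⊗ x ↦ ι(h₍₁₎) x ι(S(h₍₂₎))`
    let adMap : H ⊗[k] K →ₗ[k] K :=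
      LinearMap.mul' k K ∘ₗ
        LinearMap.lTensor K (LinearMap.mul' k K ∘ₗ (TensorProduct.comm k K K).toLinearMap) ∘ₗ
        (TensorProduct.assoc k K K K).toLinearMap ∘ₗ
        TensorProduct.map
          (TensorProduct.map ι.toLinearMap
            (ι.toLinearMap ∘ₗ HopfAlgebra.antipode (R := k))) LinearMap.id ∘ₗ
        LinearMap.rTensor K (comul (R := k))
    (1 : K) ∈ R ∧
    (∀ x ∈ R, ∀ y ∈ R, x * y ∈ R) ∧
    (∀ (h : H), ∀ x ∈ R, adMap (h ⊗ₜ[k] x) ∈ R) ∧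
    Function.Bijective
      (LinearMap.mul' k K ∘ₗ TensorProduct.map R.subtype ι.toLinearMap :
        R ⊗[k] H →ₗ[k] K) := by
  intro R adMap
  have hR : R = (Radford.coinvariants π).toSubmodule := by
    ext x
    exact sub_eq_zero
  have hadMap : adMap = Radford.adjointAction ι := rfl
  clear_value R adMap
  subst hR hadMap
  exact ⟨(Radford.coinvariants π).one_mem,
    fun _ hx _ hy => (Radford.coinvariants π).mul_mem hx hy,
    fun h _ hx => Radford.adjointAction_mem_coinvariants π ι hπι h hx,
    Radford.bijective_mul'_comp_map_subtype π ι hπι⟩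
end
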